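/- Let T be a finite rooted tree with root o. If g solves Ω_p g(i) = -μ_i |f_i|^{p-2} f_i for i ∈ V \ {o}, g_o = 0, and g_i > g_{i*} for all i ∈ V \ {o}, and f > 0 on V \ {o}, then g_i = Σ_{k ∈ 𝒫(i)} (v_k^{-1} Σ_{j ∈ V_k} μ_j f_j^{p-1})^{p̂-1} for all i ∈ V \ {o}, where 𝒫(i) is the set of non-root vertices on the path from i to the root, V_k the subtree rooted at k, and p̂ the conjugate of p. -/

import Mathlib

/-!
Since `g` increases strictly away from the root, the absolute values in `Ω_p` disappear and the
Poisson equation at `k` says that the flux `F_k = v_k (g_k - g_{k*})^{p-1}` through the edge from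
`k` to its parent is `μ_k f_k^{p-1}` plus the fluxes through the edges from the children of `k`.
Unwinding this recursion over the subtree gives `F_k = Σ_{j ∈ V_k} μ_j f_j^{p-1}`. As
`(p - 1)(p̂ - 1) = 1`, this determines the increments `g_k - g_{k*}`, which telescope along the path
from `i` to the root, where `g` vanishes.
-/

open scoped ENNReal Classical BigOperators

structure PTree (V : Type) where
  root : V
  par : V → V
  level : V → ℕ
  level_root : level root = 0
  par_root : par root = root
  level_par : ∀ i, i ≠ root → level i = level (par i) + 1
  par_iter_root : ∀ i, par^[level i] i = root

def PTree.anc {V : Type} (T : PTree V) (k j : V) : Prop := ∃ m, T.par^[m] j = k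

noncomputable def OmegaF {V : Type} [Fintype V] (T : PTree V) (v : V → ℝ) (p : ℝ)
    (f : V → ℝ) (i : V) : ℝ :=
  (∑ j ∈ Finset.univ.filter (fun j => T.par j = i ∧ j ≠ T.root),
      v j * |f j - f i| ^ (p - 2) * (f j - f i))
    + v i * |f (T.par i) - f i| ^ (p - 2) * (f (T.par i) - f i)

namespace PTree

variable {V : Type} (T : PTree V)

lemma iterate_par_root (m : ℕ) : T.par^[m] T.root = T.root :=
  Function.iterate_fixed T.par_root m

lemma level_iterate_par (j : V) {m : ℕ} (hm : m ≤ T.level j) :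
    T.level (T.par^[m] j) = T.level j - m := by
  induction m with
  | zero => simp
  | succ n ih =>
    have hn := ih (by omega)
    have hne : T.par^[n] j ≠ T.root := by
      intro hr
      rw [hr, T.level_root] at hn
      omega
    rw [Function.iterate_succ_apply']
    have := T.level_par _ hne
    omega

lemma iterate_par_eq_root_of_level_le (j : V) {m : ℕ} (hm : T.level j ≤ m) :
    T.par^[m] j = T.root := by
  rw [← Nat.sub_add_cancel hm, Function.iterate_add_apply, T.par_iter_root, T.iterate_par_root]

lemma anc_refl (k : V) : T.anc k k := ⟨0, rfl⟩

lemma anc_trans {k c j : V} (hkc : T.anc k c) (hcj : T.anc c j) : T.anc k j := by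
  obtain ⟨m, rfl⟩ := hkc
  obtain ⟨m', rfl⟩ := hcj
  exact ⟨m + m', Function.iterate_add_apply _ _ _ _⟩

lemma anc_par (j : V) : T.anc (T.par j) j := ⟨1, rfl⟩

lemma level_le_and_iterate_eq_of_anc {k j : V} (hk : k ≠ T.root) (h : T.anc k j) :
    T.level k ≤ T.level j ∧ T.par^[T.level j - T.level k] j = k := by
  obtain ⟨m, rfl⟩ := h
  have hm : m < T.level j := by
    by_contra! hm
    exact hk (T.iterate_par_eq_root_of_level_le j hm)
  rw [T.level_iterate_par j hm.le, Nat.sub_sub_self hm.le]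
  exact ⟨Nat.sub_le _ _, rfl⟩

lemma eq_of_anc_of_level_eq {k k' j : V} (hk : k ≠ T.root) (hk' : k' ≠ T.root)
    (h : T.anc k j) (h' : T.anc k' j) (hl : T.level k = T.level k') : k = k' := by
  rw [← (T.level_le_and_iterate_eq_of_anc hk h).2, ← (T.level_le_and_iterate_eq_of_anc hk' h').2,
    hl]

lemma anc_root_iff {k : V} : T.anc k T.root ↔ k = T.root := by
  refine ⟨fun ⟨m, hm⟩ => ?_, fun h => h ▸ T.anc_refl _⟩
  rw [← hm, T.iterate_par_root]

variable [Fintype V]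

noncomputable def children (k : V) : Finset V := Finset.univ.filter (fun c => T.par c = k ∧ c ≠ T.root)

noncomputable def subtree (k : V) : Finset V := Finset.univ.filter (fun j => T.anc k j)

/-- The paper's `𝒫(i)`. -/
noncomputable def path (i : V) : Finset V := Finset.univ.filter (fun k => k ≠ T.root ∧ T.anc k i)

@[simp] lemma mem_children {k c : V} : c ∈ T.children k ↔ T.par c = k ∧ c ≠ T.root := by
  simp [children]

@[simp] lemma mem_subtree {k j : V} : j ∈ T.subtree k ↔ T.anc k j := by
  simp [subtree]

@[simp] lemma mem_path {i k : V} : k ∈ T.path i ↔ k ≠ T.root ∧ T.anc k i := by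
  simp [path]

lemma level_of_mem_children {k c : V} (hc : c ∈ T.children k) : T.level c = T.level k + 1 := by
  rw [T.mem_children] at hc
  rw [T.level_par c hc.2, hc.1]

lemma notMem_subtree_of_mem_children {k c : V} (hc : c ∈ T.children k) : k ∉ T.subtree c := by
  intro hk
  have := (T.level_le_and_iterate_eq_of_anc (T.mem_children.1 hc).2 (T.mem_subtree.1 hk)).1
  have := T.level_of_mem_children hc
  omega

lemma subtree_ssubset_of_mem_children {k c : V} (hc : c ∈ T.children k) :
    T.subtree c ⊂ T.subtree k := by
  refine (Finset.ssubset_iff_of_subset fun j hj => ?_).2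
    ⟨k, T.mem_subtree.2 (T.anc_refl k), T.notMem_subtree_of_mem_children hc⟩
  rw [T.mem_subtree] at hj ⊢
  exact T.anc_trans ((T.mem_children.1 hc).1 ▸ T.anc_par c) hj

lemma exists_mem_children_anc {k j : V} (hk : k ≠ T.root) (h : T.anc k j) (hjk : j ≠ k) :
    ∃ c ∈ T.children k, T.anc c j := by
  obtain ⟨hle, he⟩ := T.level_le_and_iterate_eq_of_anc hk h
  set m := T.level j - T.level k
  have hm : m ≠ 0 := fun h0 => hjk (by rwa [h0] at he)
  refine ⟨T.par^[m - 1] j, T.mem_children.2 ⟨?_, fun hr => ?_⟩, m - 1, rfl⟩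
  · rwa [← Function.iterate_succ_apply' T.par, Nat.succ_eq_add_one, Nat.sub_one_add_one hm]
  · have := T.level_iterate_par j (m := m - 1) (by omega)
    rw [hr, T.level_root] at this
    omega

lemma subtree_eq_insert_biUnion {k : V} (hk : k ≠ T.root) :
    T.subtree k = insert k ((T.children k).biUnion T.subtree) := by
  ext j
  simp only [Finset.mem_insert, Finset.mem_biUnion, mem_subtree]
  constructor
  · intro h
    by_cases hjk : j = k
    · exact .inl hjk
    · exact .inr (T.exists_mem_children_anc hk h hjk)
  · rintro (rfl | ⟨c, hc, hcj⟩)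
    · exact T.anc_refl j
    · exact T.anc_trans ((T.mem_children.1 hc).1 ▸ T.anc_par c) hcj

lemma pairwiseDisjoint_subtree_children (k : V) :
    (T.children k : Set V).PairwiseDisjoint T.subtree := by
  intro c hc c' hc' hne
  refine Finset.disjoint_left.2 fun j hj hj' => hne ?_
  rw [Finset.mem_coe] at hc hc'
  exact T.eq_of_anc_of_level_eq (T.mem_children.1 hc).2 (T.mem_children.1 hc').2
    (T.mem_subtree.1 hj) (T.mem_subtree.1 hj')
    (by rw [T.level_of_mem_children hc, T.level_of_mem_children hc'])

lemma sum_subtree {M : Type*} [AddCommMonoid M] (a : V → M) {k : V} (hk : k ≠ T.root) :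
    ∑ j ∈ T.subtree k, a j = a k + ∑ c ∈ T.children k, ∑ j ∈ T.subtree c, a j := by
  rw [T.subtree_eq_insert_biUnion hk, Finset.sum_insert, Finset.sum_biUnion
    (T.pairwiseDisjoint_subtree_children k)]
  simp only [Finset.mem_biUnion, not_exists, not_and]
  exact fun c hc => T.notMem_subtree_of_mem_children hc

theorem eq_sum_subtree_of_eq_add_sum_children {M : Type*} [AddCommMonoid M] (w a : V → M)
    (hw : ∀ k, k ≠ T.root → w k = a k + ∑ c ∈ T.children k, w c) :
    ∀ k, k ≠ T.root → w k = ∑ j ∈ T.subtree k, a j := by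
  intro k
  induction hn : (T.subtree k).card using Nat.strong_induction_on generalizing k with
  | _ n ih =>
    intro hk
    rw [hw k hk, T.sum_subtree a hk]
    refine congrArg _ (Finset.sum_congr rfl fun c hc => ?_)
    exact ih _ (hn ▸ Finset.card_lt_card (T.subtree_ssubset_of_mem_children hc)) c rfl
      (T.mem_children.1 hc).2

lemma path_root : T.path T.root = ∅ := by
  ext k
  simp only [mem_path, anc_root_iff, Finset.notMem_empty, not_and_self]

lemma path_eq_insert {i : V} (hi : i ≠ T.root) : T.path i = insert i (T.path (T.par i)) := by
  ext k
  simp only [Finset.mem_insert, mem_path]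
  constructor
  · rintro ⟨hk, m, rfl⟩
    cases m with
    | zero => exact .inl rfl
    | succ m => exact .inr ⟨hk, m, by rw [Function.iterate_succ_apply]⟩
  · rintro (rfl | ⟨hk, hki⟩)
    · exact ⟨hi, T.anc_refl k⟩
    · exact ⟨hk, T.anc_trans hki (T.anc_par i)⟩

lemma notMem_path_par {i : V} (hi : i ≠ T.root) : i ∉ T.path (T.par i) := by
  intro h
  have := (T.level_le_and_iterate_eq_of_anc hi (T.mem_path.1 h).2).1
  have := T.level_par i hi
  omega

theorem eq_sum_path_of_sub_par_eq {G : Type*} [AddCommGroup G] (g d : V → G)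
    (h0 : g T.root = 0) (hd : ∀ i, i ≠ T.root → g i - g (T.par i) = d i) (i : V) :
    g i = ∑ k ∈ T.path i, d k := by
  induction hn : T.level i generalizing i with
  | zero =>
    have hi : i = T.root := by
      by_contra hi
      have := T.level_par i hi
      omega
    rw [hi, h0, T.path_root, Finset.sum_empty]
  | succ n ih =>
    have hi : i ≠ T.root := fun hi => by rw [hi, T.level_root] at hn; omega
    rw [T.path_eq_insert hi, Finset.sum_insert (T.notMem_path_par hi), ← hd i hi,
      ← ih (T.par i) (by have := T.level_par i hi; omega), sub_add_cancel]

end PTree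

lemma abs_rpow_sub_two_mul_self (p : ℝ) {x : ℝ} (hx : 0 < x) : |x| ^ (p - 2) * x = x ^ (p - 1) := by
  rw [abs_of_pos hx, show p - 1 = p - 2 + 1 by ring, Real.rpow_add hx, Real.rpow_one]

lemma Real.HolderConjugate.rpow_sub_one_rpow_sub_one {p q : ℝ} (h : p.HolderConjugate q) {x : ℝ}
    (hx : 0 ≤ x) : (x ^ (p - 1)) ^ (q - 1) = x := by
  have : (p - 1) * (q - 1) = 1 := by linear_combination h.sub_one_mul_conj
  rw [← Real.rpow_mul hx, this, Real.rpow_one]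

noncomputable def PTree.flux {V : Type} (T : PTree V) (v : V → ℝ) (p : ℝ) (g : V → ℝ) (k : V) :
    ℝ :=
  v k * (g k - g (T.par k)) ^ (p - 1)

lemma omegaF_eq_sum_flux_children_sub_flux {V : Type} [Fintype V] (T : PTree V) (v : V → ℝ)
    (p : ℝ) {g : V → ℝ} (hg : ∀ i, i ≠ T.root → g (T.par i) < g i) {k : V} (hk : k ≠ T.root) :
    OmegaF T v p g k = ∑ c ∈ T.children k, T.flux v p g c - T.flux v p g k := by
  have hchild : ∀ c ∈ T.children k,
      v c * |g c - g k| ^ (p - 2) * (g c - g k) = T.flux v p g c := by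
    intro c hc
    obtain ⟨rfl, hcr⟩ := T.mem_children.1 hc
    rw [mul_assoc, abs_rpow_sub_two_mul_self p (sub_pos.2 (hg c hcr)), PTree.flux]
  have hself : v k * |g (T.par k) - g k| ^ (p - 2) * (g (T.par k) - g k) = -T.flux v p g k := by
    rw [← neg_sub, abs_neg, mul_assoc, mul_neg, abs_rpow_sub_two_mul_self p (sub_pos.2 (hg k hk)),
      PTree.flux, neg_mul_eq_mul_neg]
  rw [OmegaF, ← PTree.children, Finset.sum_congr rfl hchild, hself, sub_eq_add_neg]

theorem poisson_solution_formula_general {V : Type} [Fintype V] (T : PTree V)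
    (v μ : V → ℝ) (p q : ℝ) (hp : 1 < p) (hpq : 1 / p + 1 / q = 1)
    (hv : ∀ i, 0 < v i)
    (f g : V → ℝ)
    (hpoisson : ∀ i, i ≠ T.root →
      OmegaF T v p g i = -(μ i) * (|f i| ^ (p - 2) * f i))
    (hg0 : g T.root = 0)
    (hgmono : ∀ i, i ≠ T.root → g (T.par i) < g i)
    (hf : ∀ i, i ≠ T.root → 0 < f i) :
    ∀ i, i ≠ T.root →
      g i = ∑ k ∈ Finset.univ.filter (fun k => k ≠ T.root ∧ T.anc k i),
        ((v k)⁻¹ * ∑ j ∈ Finset.univ.filter (fun j => T.anc k j),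
            μ j * f j ^ (p - 1)) ^ (q - 1) := by
  have hconj : p.HolderConjugate q := Real.holderConjugate_iff.2 ⟨hp, by simpa only [one_div] using hpq⟩
  have hflux : ∀ k, k ≠ T.root →
      T.flux v p g k = μ k * f k ^ (p - 1) + ∑ c ∈ T.children k, T.flux v p g c := by
    intro k hk
    have := hpoisson k hk
    rw [omegaF_eq_sum_flux_children_sub_flux T v p hgmono hk, abs_rpow_sub_two_mul_self p (hf k hk)]
      at this
    linarith
  have hsubtree := T.eq_sum_subtree_of_eq_add_sum_children _ _ hflux
  intro i _
  refine T.eq_sum_path_of_sub_par_eq g _ hg0 (fun k hk => ?_) i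
  rw [← PTree.subtree, ← hsubtree k hk, PTree.flux, inv_mul_cancel_left₀ (hv k).ne',
    hconj.rpow_sub_one_rpow_sub_one (sub_pos.2 (hgmono k hk)).le]

/-- On a finite rooted tree, the solution of the Poisson equation which is
strictly increasing along paths is recovered from `f` by integrating the
difference relation along paths:
`g_i = Σ_{k ∈ 𝒫(i)} (v_k⁻¹ Σ_{j ∈ V_k} μ_j f_j^{p-1})^{p̂-1}`. -/
theorem poisson_solution_formula {V : Type} [Fintype V] (T : PTree V)
    (v μ : V → ℝ) (p q : ℝ) (hp : 1 < p) (hpq : 1 / p + 1 / q = 1)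
    (hv : ∀ i, 0 < v i) (hμ : ∀ i, 0 < μ i)
    (f g : V → ℝ)
    (hpoisson : ∀ i, i ≠ T.root →
      OmegaF T v p g i = -(μ i) * (|f i| ^ (p - 2) * f i))
    (hg0 : g T.root = 0)
    (hgmono : ∀ i, i ≠ T.root → g (T.par i) < g i)
    (hf : ∀ i, i ≠ T.root → 0 < f i) :
    ∀ i, i ≠ T.root →
      g i = ∑ k ∈ Finset.univ.filter (fun k => k ≠ T.root ∧ T.anc k i),
        ((v k)⁻¹ * ∑ j ∈ Finset.univ.filter (fun j => T.anc k j),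
            μ j * f j ^ (p - 1)) ^ (q - 1) :=
  poisson_solution_formula_general T v μ p q hp hpq hv f g hpoisson hg0 hgmono hf
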